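/- For every permutation π of [n], the constant L̂_π = (1/(mn))‖Λ_π^{1/2}(∑_{j=1}^m I_{b(j−1)↑}A_πA_π^⊤I_{b(j−1)↑})Λ_π^{1/2}‖₂ satisfies the chain of inequalities L̂_π ≤ (1/(mn))∑_{j=1}^m ‖I_{b(j−1)↑}Λ_π^{1/2}A_π(Λ_π^{1/2}A_π)^⊤I_{b(j−1)↑}‖₂ ≤ (1/n)‖Λ^{1/2}A(Λ^{1/2}A)^⊤‖₂ ≤ (1/n)∑_{i=1}^n L_i‖a_i‖₂² ≤ max_{1≤i≤n} L_i‖a_i‖₂² = L. In particular L̂ = max_π L̂_π ≤ L. -/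

import Mathlib

open Finset Matrix

namespace SSGD

/-- squared Euclidean norm of a finite vector -/
noncomputable def sq {ι : Type*} [Fintype ι] (x : ι → ℝ) : ℝ := ∑ i, (x i) ^ 2

/-- Euclidean dot product -/
noncomputable def dot {ι : Type*} [Fintype ι] (x y : ι → ℝ) : ℝ := ∑ i, x i * y i

/-- weighted squared norm `‖u‖²_{(diag w)⁻¹} = ∑ i, (u i)² / w i` -/
noncomputable def wsq {ι : Type*} [Fintype ι] (w u : ι → ℝ) : ℝ := ∑ i, (u i) ^ 2 / w i

/-- operator (spectral) norm of a real matrix -/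
noncomputable def opNorm {α β : Type*} [Fintype α] [Fintype β] [DecidableEq β]
    (M : Matrix α β ℝ) : ℝ :=
  ‖LinearMap.toContinuousLinearMap (Matrix.toEuclideanLin M)‖

/-- `0`-based global index of the `j`-th element of the `i`-th batch of size `b` -/
def idx (b m : ℕ) (i : Fin m) (j : Fin b) : Fin (b * m) :=
  ⟨b * i.1 + j.1, by
    have hi : i.1 + 1 ≤ m := i.2
    have hj : j.1 < b := j.2
    calc b * i.1 + j.1 < b * i.1 + b := by omega
      _ = b * (i.1 + 1) := by ring
      _ ≤ b * m := Nat.mul_le_mul (le_refl b) hi⟩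

/-- `I_{j↑}` : the identity matrix with its first `j` diagonal entries zeroed out -/
noncomputable def Iup (n j : ℕ) : Matrix (Fin n) (Fin n) ℝ :=
  Matrix.diagonal fun i => if j ≤ i.1 then 1 else 0

/-- `I_{(j)}` (`j` 0-based) : diagonal matrix with ones exactly in positions
`b*j, …, b*(j+1)-1` -/
noncomputable def Iblk (n b j : ℕ) : Matrix (Fin n) (Fin n) ℝ :=
  Matrix.diagonal fun i => if b * j ≤ i.1 ∧ i.1 < b * (j + 1) then 1 else 0

variable {d b m : ℕ}

/-- the row-permuted data matrix `A_π` (row `i` of `A_π` is row `π i` of `A`) -/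
def permMat (A : Matrix (Fin (b * m)) (Fin d) ℝ) (π : Equiv.Perm (Fin (b * m))) :
    Matrix (Fin (b * m)) (Fin d) ℝ :=
  A.submatrix π id

/-- `Ĉ_π = (1/(m·n)) ‖W_π^{1/2} (∑_{j=1}^m I_{b(j-1)↑} A_π A_πᵀ I_{b(j-1)↑}) W_π^{1/2}‖₂`;
this is `L̂_π` for `w = L` and `Ĝ_π` for `w = G²`. -/
noncomputable def hatC (A : Matrix (Fin (b * m)) (Fin d) ℝ) (w : Fin (b * m) → ℝ)
    (π : Equiv.Perm (Fin (b * m))) : ℝ :=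
  (1 / ((m : ℝ) * ((b * m : ℕ) : ℝ))) * opNorm
    (Matrix.diagonal (fun i => Real.sqrt (w (π i))) *
      (∑ j : Fin m,
        Iup (b * m) (b * j.1) * (permMat A π * (permMat A π)ᵀ) * Iup (b * m) (b * j.1)) *
      Matrix.diagonal (fun i => Real.sqrt (w (π i))))

/-- `C̃_π = (1/b) ‖W_π^{1/2} (∑_{j=1}^m I_{(j)} A_π A_πᵀ I_{(j)}) W_π^{1/2}‖₂`;
this is `L̃_π` for `w = L` and `G̃_π` for `w = G²`. -/
noncomputable def tilC (A : Matrix (Fin (b * m)) (Fin d) ℝ) (w : Fin (b * m) → ℝ)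
    (π : Equiv.Perm (Fin (b * m))) : ℝ :=
  (1 / (b : ℝ)) * opNorm
    (Matrix.diagonal (fun i => Real.sqrt (w (π i))) *
      (∑ j : Fin m,
        Iblk (b * m) b j.1 * (permMat A π * (permMat A π)ᵀ) * Iblk (b * m) b j.1) *
      Matrix.diagonal (fun i => Real.sqrt (w (π i))))

/-- one inner (mini-batch) step of shuffled SGD, using the (sub)gradient selection `g` -/
noncomputable def step (A : Matrix (Fin (b * m)) (Fin d) ℝ) (g : Fin (b * m) → ℝ → ℝ)
    (η : ℝ) (π : Equiv.Perm (Fin (b * m))) (i : Fin m) (x : Fin d → ℝ) : Fin d → ℝ :=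
  fun t => x t - (η / (b : ℝ)) *
    ∑ j : Fin b, g (π (idx b m i j)) (dot (A (π (idx b m i j))) x) * A (π (idx b m i j)) t

/-- the primal iterates `x_{k-1,1}, …, x_{k-1,m+1}` within a single epoch
(`inIter A g η π x0 i` is `x_{k-1,i+1}`, so `inIter … 0 = x_{k-1}` and
`inIter … m = x_k`) -/
noncomputable def inIter (A : Matrix (Fin (b * m)) (Fin d) ℝ) (g : Fin (b * m) → ℝ → ℝ)
    (η : ℝ) (π : Equiv.Perm (Fin (b * m))) (x0 : Fin d → ℝ) : ℕ → Fin d → ℝ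
  | 0 => x0
  | i + 1 =>
    if h : i < m then step A g η π ⟨i, h⟩ (inIter A g η π x0 i) else inIter A g η π x0 i

/-- the dual vector `y_k` of one epoch, in permuted coordinates: its `p`-th entry is
`g_{π(p)}(a_{π(p)}ᵀ x_{k-1,i})` where `i` is the batch containing position `p` -/
noncomputable def dualY (A : Matrix (Fin (b * m)) (Fin d) ℝ) (g : Fin (b * m) → ℝ → ℝ)
    (η : ℝ) (π : Equiv.Perm (Fin (b * m))) (x0 : Fin d → ℝ) : Fin (b * m) → ℝ :=
  fun p => g (π p) (dot (A (π p)) (inIter A g η π x0 (p.1 / b)))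

/-- multi-epoch shuffled SGD: `xSeq A g η πs x0 k` is the iterate after `k` full epochs;
the (0-based) epoch `k` uses the permutation `πs k` and the step size `η k`. -/
noncomputable def xSeq (A : Matrix (Fin (b * m)) (Fin d) ℝ) (g : Fin (b * m) → ℝ → ℝ)
    (η : ℕ → ℝ) (πs : ℕ → Equiv.Perm (Fin (b * m))) (x0 : Fin d → ℝ) : ℕ → Fin d → ℝ
  | 0 => x0
  | k + 1 => inIter A g (η k) (πs k) (xSeq A g η πs x0 k) m

/-- the convex (Fenchel) conjugate of `f : ℝ → ℝ` -/
noncomputable def fconj (f : ℝ → ℝ) (y : ℝ) : ℝ := sSup (Set.range fun t => y * t - f t)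

/-- the Lagrangian `𝓛(x,y) = (1/n) ⟨A x, y⟩ - (1/n) ∑ᵢ ℓᵢ*(yⁱ)` -/
noncomputable def Lagr (A : Matrix (Fin (b * m)) (Fin d) ℝ) (ℓ : Fin (b * m) → ℝ → ℝ)
    (x : Fin d → ℝ) (y : Fin (b * m) → ℝ) : ℝ :=
  (1 / ((b * m : ℕ) : ℝ)) * ∑ i, dot (A i) x * y i
    - (1 / ((b * m : ℕ) : ℝ)) * ∑ i, fconj (ℓ i) (y i)

/-- `g` is a (global) subgradient of `f` at `t` -/
def IsSubgrad (f : ℝ → ℝ) (t g : ℝ) : Prop := ∀ s, f t + g * (s - t) ≤ f s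

/-- expectation with respect to the uniform distribution on a finite type -/
noncomputable def Eunif {α : Type*} [Fintype α] (F : α → ℝ) : ℝ :=
  (∑ a : α, F a) / (Fintype.card α : ℝ)

/-- extend a `K`-tuple of permutations to an `ℕ`-indexed sequence (by the identity) -/
def extSeq {K n : ℕ} (g : Fin K → Equiv.Perm (Fin n)) : ℕ → Equiv.Perm (Fin n) :=
  fun k => if h : k < K then g ⟨k, h⟩ else 1

/-!
`Λ_π^{1/2}` and `I_{j↑}` are diagonal, hence commute, so
`Λ_π^{1/2} (∑_j I_{j↑} A_π A_πᵀ I_{j↑}) Λ_π^{1/2} = ∑_j I_{j↑} B_π B_πᵀ I_{j↑}` with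
`B_π = Λ_π^{1/2} A_π`, and the triangle inequality gives the first bound. Since `B_π = P_π B`
for the permutation matrix `P_π` and `B = Λ^{1/2} A`, and both `I_{j↑}` and `P_π` have operator
norm at most `1`, every summand is at most `‖B Bᵀ‖₂`. That norm is at most `‖B‖₂²`, which is
bounded by the squared Frobenius norm `∑ᵢ Lᵢ‖aᵢ‖²`; finally an average is at most a maximum.
-/

open scoped Matrix.Norms.L2Operator

theorem opNorm_eq_l2_opNorm {α β : Type*} [Fintype α] [Fintype β] [DecidableEq β]
    (M : Matrix α β ℝ) : opNorm M = ‖M‖ := rfl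

theorem l2_opNorm_le_sqrt_sum_sq {α β : Type*} [Fintype α] [Fintype β] [DecidableEq β]
    (M : Matrix α β ℝ) : ‖M‖ ≤ √(∑ i, ∑ j, M i j ^ 2) := by
  refine ContinuousLinearMap.opNorm_le_bound _ (Real.sqrt_nonneg _) fun x => ?_
  simp only [LinearEquiv.trans_apply, LinearMap.coe_toContinuousLinearMap', Matrix.toLpLin_apply,
    EuclideanSpace.norm_eq, Real.norm_eq_abs, sq_abs]
  rw [← Real.sqrt_mul (by positivity), Finset.sum_mul]
  gcongr with i
  exact Finset.sum_mul_sq_le_sq_mul_sq _ _ _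

theorem l2_opNorm_mul_transpose_self_le {α β : Type*} [Fintype α] [Fintype β] [DecidableEq α]
    [DecidableEq β] (M : Matrix α β ℝ) : ‖M * Mᵀ‖ ≤ ∑ i, ∑ j, M i j ^ 2 := by
  have hT : ‖Mᵀ‖ = ‖M‖ := by
    rw [← Matrix.conjTranspose_eq_transpose_of_trivial, Matrix.l2_opNorm_conjTranspose]
  calc ‖M * Mᵀ‖ ≤ ‖M‖ * ‖Mᵀ‖ := Matrix.l2_opNorm_mul _ _
    _ = ‖M‖ ^ 2 := by rw [hT, pow_two]
    _ ≤ √(∑ i, ∑ j, M i j ^ 2) ^ 2 := by gcongr; exact l2_opNorm_le_sqrt_sum_sq M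
    _ = ∑ i, ∑ j, M i j ^ 2 := Real.sq_sqrt (by positivity)

theorem l2_opNorm_mul_mul_le_of_le_one {ι : Type*} [Fintype ι] [DecidableEq ι]
    {P M Q : Matrix ι ι ℝ} (hP : ‖P‖ ≤ 1) (hQ : ‖Q‖ ≤ 1) : ‖P * M * Q‖ ≤ ‖M‖ :=
  calc ‖P * M * Q‖ ≤ ‖P‖ * ‖M‖ * ‖Q‖ :=
        (Matrix.l2_opNorm_mul _ _).trans (by gcongr; exact Matrix.l2_opNorm_mul _ _)
    _ ≤ 1 * ‖M‖ * 1 := by gcongr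
    _ = ‖M‖ := by ring

theorem l2_opNorm_Iup_le_one (n j : ℕ) : ‖Iup n j‖ ≤ 1 := by
  rw [Iup, Matrix.l2_opNorm_diagonal, pi_norm_le_iff_of_nonneg zero_le_one]
  intro i
  split_ifs <;> simp

theorem l2_opNorm_permMatrix_conj_le {ι : Type*} [Fintype ι] [DecidableEq ι]
    (ρ : Equiv.Perm ι) (M : Matrix ι ι ℝ) :
    ‖ρ.permMatrix ℝ * M * (ρ.permMatrix ℝ)ᵀ‖ ≤ ‖M‖ := by
  refine l2_opNorm_mul_mul_le_of_le_one (Matrix.permMatrix_l2_opNorm_le ρ) ?_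
  rw [Matrix.transpose_permMatrix]
  exact Matrix.permMatrix_l2_opNorm_le _

theorem diagonal_comp_mul_submatrix_eq_permMatrix_mul {ι κ : Type*} [Fintype ι] [DecidableEq ι]
    (w : ι → ℝ) (A : Matrix ι κ ℝ) (ρ : Equiv.Perm ι) :
    Matrix.diagonal (fun i => w (ρ i)) * A.submatrix ρ id
      = ρ.permMatrix ℝ * (Matrix.diagonal w * A) := by
  rw [Equiv.Perm.permMatrix, PEquiv.toMatrix_toPEquiv_mul]
  ext i k
  simp [Matrix.diagonal_mul]

theorem diagonal_mul_diagonal_conj_comm {ι : Type*} [Fintype ι] [DecidableEq ι]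
    (v w : ι → ℝ) (M : Matrix ι ι ℝ) :
    Matrix.diagonal v * (Matrix.diagonal w * M * Matrix.diagonal w) * Matrix.diagonal v
      = Matrix.diagonal w * (Matrix.diagonal v * M * Matrix.diagonal v) * Matrix.diagonal w := by
  have h : Matrix.diagonal v * Matrix.diagonal w = Matrix.diagonal w * Matrix.diagonal v := by
    simp only [Matrix.diagonal_mul_diagonal, mul_comm]
  simp only [← mul_assoc, h]
  simp only [mul_assoc, h]

theorem one_div_card_mul_sum_le_ciSup {ι : Type*} [Fintype ι] (f : ι → ℝ) :
    1 / (Fintype.card ι : ℝ) * ∑ i, f i ≤ ⨆ i, f i := by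
  rcases isEmpty_or_nonempty ι with hι | hι
  · simp
  have hsum : ∑ i, f i ≤ Fintype.card ι * ⨆ i, f i := by
    simpa using Finset.sum_le_card_nsmul Finset.univ f _ fun i _ =>
      le_ciSup (Finite.bddAbove_range f) i
  rw [one_div_mul_eq_div, div_le_iff₀' (by exact_mod_cast Fintype.card_pos)]
  exact hsum

theorem l2_opNorm_diagonal_mul_sum_Iup_le {ι κ : Type*} [Fintype κ] [DecidableEq κ] {n : ℕ}
    (w : Fin n → ℝ) (P : Matrix (Fin n) κ ℝ) (s : Finset ι) (k : ι → ℕ) :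
    ‖Matrix.diagonal w * (∑ j ∈ s, Iup n (k j) * (P * Pᵀ) * Iup n (k j)) * Matrix.diagonal w‖
      ≤ ∑ j ∈ s, ‖Iup n (k j) * ((Matrix.diagonal w * P) * (Matrix.diagonal w * P)ᵀ)
          * Iup n (k j)‖ := by
  rw [Finset.mul_sum, Finset.sum_mul]
  refine (norm_sum_le _ _).trans_eq (Finset.sum_congr rfl fun j _ => ?_)
  rw [Iup, diagonal_mul_diagonal_conj_comm, Matrix.transpose_mul, Matrix.diagonal_transpose]
  simp only [Matrix.mul_assoc]

/-- The paper's `Λ_ρ^{1/2} A_ρ`. -/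
noncomputable def scaledPermMat (A : Matrix (Fin (b * m)) (Fin d) ℝ) (w : Fin (b * m) → ℝ)
    (ρ : Equiv.Perm (Fin (b * m))) : Matrix (Fin (b * m)) (Fin d) ℝ :=
  Matrix.diagonal (fun i => √(w (ρ i))) * permMat A ρ

theorem hatC_le_sum_l2_opNorm (A : Matrix (Fin (b * m)) (Fin d) ℝ) (w : Fin (b * m) → ℝ)
    (π : Equiv.Perm (Fin (b * m))) :
    hatC A w π ≤ 1 / ((m : ℝ) * ((b * m : ℕ) : ℝ)) * ∑ j : Fin m,
      ‖Iup (b * m) (b * j.1) * (scaledPermMat A w π * (scaledPermMat A w π)ᵀ)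
        * Iup (b * m) (b * j.1)‖ := by
  unfold hatC
  gcongr
  exact l2_opNorm_diagonal_mul_sum_Iup_le _ _ _ _

theorem scaledPermMat_eq_permMatrix_mul (A : Matrix (Fin (b * m)) (Fin d) ℝ)
    (w : Fin (b * m) → ℝ) (ρ : Equiv.Perm (Fin (b * m))) :
    scaledPermMat A w ρ = ρ.permMatrix ℝ * scaledPermMat A w 1 := by
  rw [scaledPermMat, scaledPermMat, permMat, permMat, Equiv.Perm.coe_one, Matrix.submatrix_id_id]
  exact diagonal_comp_mul_submatrix_eq_permMatrix_mul (fun i => √(w i)) A ρ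

theorem l2_opNorm_scaledPermMat_mul_transpose_le (A : Matrix (Fin (b * m)) (Fin d) ℝ)
    (w : Fin (b * m) → ℝ) (ρ : Equiv.Perm (Fin (b * m))) :
    ‖scaledPermMat A w ρ * (scaledPermMat A w ρ)ᵀ‖
      ≤ ‖scaledPermMat A w 1 * (scaledPermMat A w 1)ᵀ‖ := by
  rw [scaledPermMat_eq_permMatrix_mul A w ρ, Matrix.transpose_mul]
  simpa only [Matrix.mul_assoc] using l2_opNorm_permMatrix_conj_le ρ
    (scaledPermMat A w 1 * (scaledPermMat A w 1)ᵀ)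

theorem l2_opNorm_scaledPermMat_one_le (A : Matrix (Fin (b * m)) (Fin d) ℝ)
    (w : Fin (b * m) → ℝ) (hw : ∀ i, 0 ≤ w i) :
    ‖scaledPermMat A w 1 * (scaledPermMat A w 1)ᵀ‖ ≤ ∑ i, w i * sq (A i) := by
  refine (l2_opNorm_mul_transpose_self_le _).trans_eq (Finset.sum_congr rfl fun i _ => ?_)
  simp [scaledPermMat, permMat, Matrix.diagonal_mul, mul_pow, Real.sq_sqrt (hw i), sq,
    Finset.mul_sum]

theorem one_div_mul_sum_l2_opNorm_Iup_conj_le {k : ℕ} (M : Matrix (Fin k) (Fin k) ℝ)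
    (s : Fin m → ℕ) {c : ℝ} (hc : 0 ≤ c) :
    1 / ((m : ℝ) * c) * ∑ j, ‖Iup k (s j) * M * Iup k (s j)‖ ≤ 1 / c * ‖M‖ := by
  have hsum : ∑ j, ‖Iup k (s j) * M * Iup k (s j)‖ ≤ m * ‖M‖ :=
    calc _ ≤ ∑ _j : Fin m, ‖M‖ := Finset.sum_le_sum fun j _ =>
          l2_opNorm_mul_mul_le_of_le_one (l2_opNorm_Iup_le_one k (s j))
            (l2_opNorm_Iup_le_one k (s j))
      _ = m * ‖M‖ := by simp
  calc _ ≤ 1 / ((m : ℝ) * c) * (m * ‖M‖) := by gcongr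
    _ = (m / m) * (1 / c * ‖M‖) := by ring
    _ ≤ 1 * (1 / c * ‖M‖) := by gcongr; exact div_self_le_one _
    _ = 1 / c * ‖M‖ := one_mul _

theorem stmt10_general
    (b m d : ℕ)
    (A : Matrix (Fin (b * m)) (Fin d) ℝ)
    (L : Fin (b * m) → ℝ) (hL : ∀ i, 0 < L i)
    (π : Equiv.Perm (Fin (b * m))) :
    let n : ℝ := ((b * m : ℕ) : ℝ)
    let sA : Equiv.Perm (Fin (b * m)) → Matrix (Fin (b * m)) (Fin d) ℝ := fun ρ =>
      Matrix.diagonal (fun i => Real.sqrt (L (ρ i))) * permMat A ρ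
    let Lfull : ℝ := ⨆ i : Fin (b * m), L i * sq (A i)
    (hatC A L π ≤ (1 / ((m : ℝ) * n)) * ∑ j : Fin m,
        opNorm (Iup (b * m) (b * j.1) * (sA π * (sA π)ᵀ) * Iup (b * m) (b * j.1)))
    ∧ ((1 / ((m : ℝ) * n)) * ∑ j : Fin m,
          opNorm (Iup (b * m) (b * j.1) * (sA π * (sA π)ᵀ) * Iup (b * m) (b * j.1))
        ≤ (1 / n) * opNorm (sA 1 * (sA 1)ᵀ))
    ∧ ((1 / n) * opNorm (sA 1 * (sA 1)ᵀ) ≤ (1 / n) * ∑ i, L i * sq (A i))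
    ∧ ((1 / n) * ∑ i, L i * sq (A i) ≤ Lfull)
    ∧ ((⨆ ρ : Equiv.Perm (Fin (b * m)), hatC A L ρ) ≤ Lfull) := by
  intro n sA Lfull
  simp only [opNorm_eq_l2_opNorm]
  have hatC_le (ρ) := hatC_le_sum_l2_opNorm A L ρ
  have sum_le (ρ) : 1 / ((m : ℝ) * n) * ∑ j : Fin m,
      ‖Iup (b * m) (b * j.1) * (sA ρ * (sA ρ)ᵀ) * Iup (b * m) (b * j.1)‖
        ≤ 1 / n * ‖sA 1 * (sA 1)ᵀ‖ :=
    (one_div_mul_sum_l2_opNorm_Iup_conj_le _ (fun j => b * j.1) (Nat.cast_nonneg _)).trans <| by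
      gcongr; exact l2_opNorm_scaledPermMat_mul_transpose_le A L ρ
  have norm_le : 1 / n * ‖sA 1 * (sA 1)ᵀ‖ ≤ 1 / n * ∑ i, L i * sq (A i) := by
    gcongr; exact l2_opNorm_scaledPermMat_one_le A L fun i => (hL i).le
  have mean_le : 1 / n * ∑ i, L i * sq (A i) ≤ Lfull := by
    simpa [n] using one_div_card_mul_sum_le_ciSup fun i => L i * sq (A i)
  exact ⟨hatC_le π, sum_le π, norm_le, mean_le,
    ciSup_le fun ρ => (hatC_le ρ).trans <| (sum_le ρ).trans <| norm_le.trans mean_le⟩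

/-- The chain of inequalities bounding `L̂_π`:
`L̂_π ≤ (1/(mn)) ∑_j ‖I_{b(j-1)↑} Λ_π^{1/2}A_π (Λ_π^{1/2}A_π)ᵀ I_{b(j-1)↑}‖₂
     ≤ (1/n) ‖Λ^{1/2}A (Λ^{1/2}A)ᵀ‖₂ ≤ (1/n) ∑ᵢ Lᵢ‖aᵢ‖² ≤ maxᵢ Lᵢ‖aᵢ‖² = L`,
and in particular `L̂ = max_π L̂_π ≤ L`. -/
theorem stmt10
    (b m d : ℕ) (hb : 0 < b) (hm : 0 < m)
    (A : Matrix (Fin (b * m)) (Fin d) ℝ)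
    (L : Fin (b * m) → ℝ) (hL : ∀ i, 0 < L i)
    (π : Equiv.Perm (Fin (b * m))) :
    let n : ℝ := ((b * m : ℕ) : ℝ)
    let sA : Equiv.Perm (Fin (b * m)) → Matrix (Fin (b * m)) (Fin d) ℝ := fun ρ =>
      Matrix.diagonal (fun i => Real.sqrt (L (ρ i))) * permMat A ρ
    let Lfull : ℝ := ⨆ i : Fin (b * m), L i * sq (A i)
    (hatC A L π ≤ (1 / ((m : ℝ) * n)) * ∑ j : Fin m,
        opNorm (Iup (b * m) (b * j.1) * (sA π * (sA π)ᵀ) * Iup (b * m) (b * j.1)))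
    ∧ ((1 / ((m : ℝ) * n)) * ∑ j : Fin m,
          opNorm (Iup (b * m) (b * j.1) * (sA π * (sA π)ᵀ) * Iup (b * m) (b * j.1))
        ≤ (1 / n) * opNorm (sA 1 * (sA 1)ᵀ))
    ∧ ((1 / n) * opNorm (sA 1 * (sA 1)ᵀ) ≤ (1 / n) * ∑ i, L i * sq (A i))
    ∧ ((1 / n) * ∑ i, L i * sq (A i) ≤ Lfull)
    ∧ ((⨆ ρ : Equiv.Perm (Fin (b * m)), hatC A L ρ) ≤ Lfull) :=
  stmt10_general b m d A L hL π
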